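/- Let G=(V,E) be a finite connected graph with m edges, let w_{0,e}>0 be initial weights, fix α∈[0,1] and a step size s with 0<s<1/(m+1). Define iterates by w_e^{(0)}=w_{0,e} and w_e^{(j+1)} = w_e^{(j)} + s·(−κ_e^{(j)} + (∑_{τ∈E} κ_τ^{(j)}·ρ_τ^{(j)})/(∑_{τ∈E} w_τ^{(j)}))·ρ_e^{(j)}, where ρ_e^{(j)} and κ_e^{(j)} denote the distance and Ollivier's α-Ricci curvature of the edge e computed from the weights w^{(j)}. Then every iterate is strictly positive (so the flow has a unique global solution) and for all j∈ℕ and all e∈E: (1−(m+1)s)^j·w_{0,e} ≤ w_e^{(j)} ≤ (1+ms)^j·∑_{τ∈E} w_{0,τ}. -/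

import Mathlib

open Finset

section RicciDefs

variable {V : Type*}

/-- The sum of the weights of the edges of a walk. -/
noncomputable def walkWeight {G : SimpleGraph V} (w : Sym2 V → ℝ) {u v : V} (p : G.Walk u v) : ℝ :=
  (p.edges.map w).sum

/-- The weighted graph distance: infimum of total weight over walks joining `u` and `v`. -/
noncomputable def gdist (G : SimpleGraph V) (w : Sym2 V → ℝ) (u v : V) : ℝ :=
  sInf {x : ℝ | ∃ p : G.Walk u v, x = walkWeight w p}

/-- A choice of ordered endpoints of an unordered pair. -/
noncomputable def endpoints (e : Sym2 V) : V × V := Quot.out e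

/-- The weighted distance between the endpoints of an edge. -/
noncomputable def edist (G : SimpleGraph V) (w : Sym2 V → ℝ) (e : Sym2 V) : ℝ :=
  gdist G w (endpoints e).1 (endpoints e).2

/-- The `α`-lazy one-step random walk at `x`. -/
noncomputable def lazyWalk (G : SimpleGraph V) [Fintype V] [DecidableEq V] [DecidableRel G.Adj]
    (w : Sym2 V → ℝ) (α : ℝ) (x : V) : V → ℝ := fun z =>
  if z = x then α
  else if G.Adj x z then (1 - α) * w s(x, z) / ∑ u ∈ G.neighborFinset x, w s(x, u)
  else 0

/-- A probability measure on a finite vertex set. -/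
def IsProbMeasure [Fintype V] (μ : V → ℝ) : Prop :=
  (∀ x, 0 ≤ μ x) ∧ ∑ x, μ x = 1

/-- A coupling between two probability measures. -/
def IsCoupling [Fintype V] (μ₁ μ₂ : V → ℝ) (A : V → V → ℝ) : Prop :=
  (∀ u v, A u v ∈ Set.Icc (0 : ℝ) 1) ∧ (∀ u, ∑ x, A u x = μ₁ u) ∧ (∀ v, ∑ y, A y v = μ₂ v)

/-- The Wasserstein distance between two probability measures. -/
noncomputable def wasserstein [Fintype V] (G : SimpleGraph V) (w : Sym2 V → ℝ)
    (μ₁ μ₂ : V → ℝ) : ℝ :=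
  sInf {x : ℝ | ∃ A : V → V → ℝ, IsCoupling μ₁ μ₂ A ∧ x = ∑ u, ∑ v, A u v * gdist G w u v}

/-- Ollivier's `α`-Ricci curvature of an edge. -/
noncomputable def ollivier [Fintype V] [DecidableEq V] (G : SimpleGraph V) [DecidableRel G.Adj]
    (w : Sym2 V → ℝ) (α : ℝ) (e : Sym2 V) : ℝ :=
  1 - wasserstein G w (lazyWalk G w α (endpoints e).1) (lazyWalk G w α (endpoints e).2)
        / edist G w e

end RicciDefs
section Lemmas
variable {V : Type*} {G : SimpleGraph V} {w : Sym2 V → ℝ}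

lemma endpoints_mk {e : Sym2 V} : s((endpoints e).1, (endpoints e).2) = e := by
  simp [endpoints, Sym2.mk]

lemma edist_eq (e : Sym2 V) : edist G w e = gdist G w (endpoints e).1 (endpoints e).2 := rfl

lemma endpoints_adj {e : Sym2 V} (he : e ∈ G.edgeSet) :
    G.Adj (endpoints e).1 (endpoints e).2 := by
  rw [← endpoints_mk (e := e)] at he; exact G.mem_edgeSet.1 he

lemma walkWeight_nonneg (hw : ∀ e ∈ G.edgeSet, 0 ≤ w e) {u v : V} (p : G.Walk u v) :
    0 ≤ walkWeight w p := by
  apply List.sum_nonneg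
  intro x hx
  obtain ⟨e, he, rfl⟩ := List.mem_map.1 hx
  exact hw e (p.edges_subset_edgeSet he)

lemma gdist_bddBelow (hw : ∀ e ∈ G.edgeSet, 0 ≤ w e) (u v : V) :
    BddBelow {x : ℝ | ∃ p : G.Walk u v, x = walkWeight w p} := by
  exact ⟨0, by rintro x ⟨p, rfl⟩; exact walkWeight_nonneg hw p⟩

lemma gdist_nonneg (hw : ∀ e ∈ G.edgeSet, 0 ≤ w e) (u v : V) : 0 ≤ gdist G w u v :=
  Real.sInf_nonneg (by rintro x ⟨p, rfl⟩; exact walkWeight_nonneg hw p)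

lemma gdist_le_walkWeight (hw : ∀ e ∈ G.edgeSet, 0 ≤ w e) {u v : V} (p : G.Walk u v) :
    gdist G w u v ≤ walkWeight w p :=
  csInf_le (gdist_bddBelow hw u v) ⟨p, rfl⟩

lemma gdist_le_total [Fintype V] [DecidableEq V] [DecidableRel G.Adj]
    (hconn : G.Connected) (hw : ∀ e ∈ G.edgeSet, 0 ≤ w e) (u v : V) :
    gdist G w u v ≤ ∑ τ ∈ G.edgeFinset, w τ := by
  obtain ⟨p⟩ := hconn u v
  refine le_trans (gdist_le_walkWeight hw p.bypass) ?_
  have hnd : p.bypass.edges.Nodup := p.bypass_isPath.edges_nodup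
  have : walkWeight w p.bypass = ∑ e ∈ p.bypass.edges.toFinset, w e := by
    rw [List.sum_toFinset _ hnd]; rfl
  rw [this]
  apply Finset.sum_le_sum_of_subset_of_nonneg
  · intro e he
    rw [List.mem_toFinset] at he
    exact SimpleGraph.mem_edgeFinset.2 (p.bypass.edges_subset_edgeSet he)
  · intro e he _
    exact hw e (SimpleGraph.mem_edgeFinset.1 he)

lemma edist_le_weight (hw : ∀ e ∈ G.edgeSet, 0 ≤ w e) {e : Sym2 V} (he : e ∈ G.edgeSet) :
    edist G w e ≤ w e := by
  have hadj := endpoints_adj (G := G) he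
  have h := gdist_le_walkWeight hw (SimpleGraph.Walk.cons hadj SimpleGraph.Walk.nil)
  rw [edist_eq]
  simp only [walkWeight, SimpleGraph.Walk.edges_cons, SimpleGraph.Walk.edges_nil,
    List.map_cons, List.map_nil, List.sum_cons, List.sum_nil, add_zero, endpoints_mk] at h
  exact h

lemma edistPos [Fintype V] [DecidableEq V] [DecidableRel G.Adj]
    (hw : ∀ e ∈ G.edgeSet, 0 < w e) {e : Sym2 V} (he : e ∈ G.edgeSet) :
    0 < edist G w e := by
  classical
  have heF : e ∈ G.edgeFinset := SimpleGraph.mem_edgeFinset.2 he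
  have hne : G.edgeFinset.Nonempty := ⟨e, heF⟩
  set c := G.edgeFinset.inf' hne w with hc
  have hcpos : 0 < c := by
    rw [hc, Finset.lt_inf'_iff]
    exact fun b hb => hw b (SimpleGraph.mem_edgeFinset.1 hb)
  have hadj := endpoints_adj (G := G) he
  have hxy : (endpoints e).1 ≠ (endpoints e).2 := hadj.ne
  have hle : ∀ (a b : V), a ≠ b → ∀ p : G.Walk a b, c ≤ walkWeight w p := by
    intro a b hab p
    cases p with
    | nil => exact absurd rfl hab
    | cons h q =>
      rename_i b'
      have h1 : c ≤ w s(a, b') :=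
        Finset.inf'_le w (SimpleGraph.mem_edgeFinset.2 (G.mem_edgeSet.2 h))
      have h2 : 0 ≤ (q.edges.map w).sum := by
        apply List.sum_nonneg
        intro x hx
        obtain ⟨e', he', rfl⟩ := List.mem_map.1 hx
        exact (hw e' (q.edges_subset_edgeSet he')).le
      simp only [walkWeight, SimpleGraph.Walk.edges_cons, List.map_cons, List.sum_cons]
      linarith
  refine lt_of_lt_of_le hcpos (le_csInf ⟨walkWeight w (SimpleGraph.Walk.cons hadj SimpleGraph.Walk.nil), _, rfl⟩ ?_)
  rintro x ⟨p, rfl⟩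
  exact hle _ _ hxy p

lemma lazyWalk_prob [Fintype V] [DecidableEq V] [DecidableRel G.Adj]
    (hw : ∀ e ∈ G.edgeSet, 0 < w e) {α : ℝ} (hα : α ∈ Set.Icc (0:ℝ) 1) (x : V)
    (hx : (G.neighborFinset x).Nonempty) : IsProbMeasure (lazyWalk G w α x) := by
  obtain ⟨hα0, hα1⟩ := hα
  set D := ∑ u ∈ G.neighborFinset x, w s(x, u) with hD
  have hDpos : 0 < D := by
    apply Finset.sum_pos _ hx
    intro u hu
    exact hw _ (G.mem_edgeSet.2 ((G.mem_neighborFinset x u).1 hu))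
  constructor
  · intro z
    simp only [lazyWalk]
    split_ifs with h1 h2
    · exact hα0
    · have hwz : 0 < w s(x, z) := hw _ (G.mem_edgeSet.2 h2)
      have : (0:ℝ) ≤ 1 - α := by linarith
      positivity
    · exact le_refl 0
  · have hsub : insert x (G.neighborFinset x) ⊆ Finset.univ := Finset.subset_univ _
    have hxn : x ∉ G.neighborFinset x := by
      simp [SimpleGraph.mem_neighborFinset]
    rw [← Finset.sum_subset hsub]
    · rw [Finset.sum_insert hxn]
      have h1 : lazyWalk G w α x x = α := by simp [lazyWalk]
      have h2 : ∀ z ∈ G.neighborFinset x,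
          lazyWalk G w α x z = (1 - α) * w s(x, z) / D := by
        intro z hz
        have hadj : G.Adj x z := (G.mem_neighborFinset x z).1 hz
        have hzx : z ≠ x := hadj.ne'
        simp [lazyWalk, hzx, hadj, hD]
      rw [h1, Finset.sum_congr rfl h2]
      have : ∑ z ∈ G.neighborFinset x, (1 - α) * w s(x, z) / D
          = (1 - α) * D / D := by
        rw [← Finset.sum_div, ← Finset.mul_sum]
      rw [this, mul_div_assoc, div_self hDpos.ne', mul_one]
      ring
    · intro z _ hz
      simp only [Finset.mem_insert, SimpleGraph.mem_neighborFinset] at hz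
      push_neg at hz
      simp [lazyWalk, hz.1, hz.2]

lemma prob_le_one [Fintype V] {μ : V → ℝ} (hμ : IsProbMeasure μ) (x : V) : μ x ≤ 1 := by
  rw [← hμ.2]
  exact Finset.single_le_sum (fun i _ => hμ.1 i) (Finset.mem_univ x)

lemma wasserstein_nonneg [Fintype V] (hw : ∀ e ∈ G.edgeSet, 0 ≤ w e) (μ₁ μ₂ : V → ℝ) :
    0 ≤ wasserstein G w μ₁ μ₂ := by
  apply Real.sInf_nonneg
  rintro x ⟨A, hA, rfl⟩
  apply Finset.sum_nonneg; intro u _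
  apply Finset.sum_nonneg; intro v _
  exact mul_nonneg (hA.1 u v).1 (gdist_nonneg hw u v)

lemma wasserstein_le_total [Fintype V] [DecidableEq V] [DecidableRel G.Adj]
    (hconn : G.Connected) (hw : ∀ e ∈ G.edgeSet, 0 ≤ w e) {μ₁ μ₂ : V → ℝ}
    (h1 : IsProbMeasure μ₁) (h2 : IsProbMeasure μ₂) :
    wasserstein G w μ₁ μ₂ ≤ ∑ τ ∈ G.edgeFinset, w τ := by
  set A : V → V → ℝ := fun u v => μ₁ u * μ₂ v with hAdef
  have hA : IsCoupling μ₁ μ₂ A := by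
    refine ⟨fun u v => ⟨mul_nonneg (h1.1 u) (h2.1 v), ?_⟩, fun u => ?_, fun v => ?_⟩
    · exact mul_le_one₀ (prob_le_one h1 u) (h2.1 v) (prob_le_one h2 v)
    · rw [hAdef, ← Finset.mul_sum, h2.2, mul_one]
    · simp only [hAdef, ← Finset.sum_mul, h1.2, one_mul]
  have hmem : (∑ u, ∑ v, A u v * gdist G w u v) ∈
      {x : ℝ | ∃ A : V → V → ℝ, IsCoupling μ₁ μ₂ A ∧ x = ∑ u, ∑ v, A u v * gdist G w u v} :=
    ⟨A, hA, rfl⟩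
  have hbdd : BddBelow {x : ℝ | ∃ A : V → V → ℝ, IsCoupling μ₁ μ₂ A ∧
      x = ∑ u, ∑ v, A u v * gdist G w u v} := by
    refine ⟨0, ?_⟩
    rintro x ⟨B, hB, rfl⟩
    apply Finset.sum_nonneg; intro u _
    apply Finset.sum_nonneg; intro v _
    exact mul_nonneg (hB.1 u v).1 (gdist_nonneg hw u v)
  refine le_trans (csInf_le hbdd hmem) ?_
  set S := ∑ τ ∈ G.edgeFinset, w τ with hS
  have key : ∀ u v : V, A u v * gdist G w u v ≤ A u v * S := by
    intro u v
    exact mul_le_mul_of_nonneg_left (gdist_le_total hconn hw u v) (hA.1 u v).1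
  calc ∑ u, ∑ v, A u v * gdist G w u v ≤ ∑ u, ∑ v, A u v * S := by
        apply Finset.sum_le_sum; intro u _
        apply Finset.sum_le_sum; intro v _
        exact key u v
    _ = (∑ u, μ₁ u) * (∑ v, μ₂ v) * S := by
        rw [Finset.sum_mul, Finset.sum_mul]
        congr 1; funext; rw [← Finset.sum_mul, ← Finset.mul_sum]
    _ = S := by rw [h1.2, h2.2, one_mul, one_mul]

lemma ollivier_mul_edist [Fintype V] [DecidableEq V] [DecidableRel G.Adj]
    (hw : ∀ e ∈ G.edgeSet, 0 < w e) (α : ℝ) {e : Sym2 V} (he : e ∈ G.edgeSet) :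
    ollivier G w α e * edist G w e = edist G w e -
      wasserstein G w (lazyWalk G w α (endpoints e).1) (lazyWalk G w α (endpoints e).2) := by
  have hρ : edist G w e ≠ 0 := (edistPos hw he).ne'
  rw [ollivier, sub_mul, div_mul_cancel₀ _ hρ, one_mul]

lemma edge_prob_fst [Fintype V] [DecidableEq V] [DecidableRel G.Adj]
    (hw : ∀ e ∈ G.edgeSet, 0 < w e) {α : ℝ} (hα : α ∈ Set.Icc (0:ℝ) 1) {e : Sym2 V}
    (he : e ∈ G.edgeSet) : IsProbMeasure (lazyWalk G w α (endpoints e).1) := by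
  have hadj := endpoints_adj (G := G) he
  exact lazyWalk_prob hw hα _ ⟨(endpoints e).2, (G.mem_neighborFinset _ _).2 hadj⟩

lemma edge_prob_snd [Fintype V] [DecidableEq V] [DecidableRel G.Adj]
    (hw : ∀ e ∈ G.edgeSet, 0 < w e) {α : ℝ} (hα : α ∈ Set.Icc (0:ℝ) 1) {e : Sym2 V}
    (he : e ∈ G.edgeSet) : IsProbMeasure (lazyWalk G w α (endpoints e).2) := by
  have hadj := endpoints_adj (G := G) he
  exact lazyWalk_prob hw hα _ ⟨(endpoints e).1, (G.mem_neighborFinset _ _).2 hadj.symm⟩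

end Lemmas

/-- Theorem 2.2 (i): bounds for the discrete quasi-normalized Ricci curvature flow with
Ollivier's curvature. -/
theorem ollivier_quasi_normalized_flow_bounds {V : Type*} [Fintype V] [DecidableEq V]
    (G : SimpleGraph V) [DecidableRel G.Adj] (hconn : G.Connected)
    (m : ℕ) (hm : G.edgeFinset.card = m)
    (α : ℝ) (hα : α ∈ Set.Icc (0 : ℝ) 1)
    (s : ℝ) (hs0 : 0 < s) (hs1 : s < 1 / ((m : ℝ) + 1))
    (w : ℕ → Sym2 V → ℝ)
    (hpos0 : ∀ e ∈ G.edgeFinset, 0 < w 0 e)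
    (hflow : ∀ j : ℕ, ∀ e ∈ G.edgeFinset,
      w (j + 1) e = w j e +
        s * (-(ollivier G (w j) α e) +
          (∑ τ ∈ G.edgeFinset, ollivier G (w j) α τ * edist G (w j) τ) /
            (∑ τ ∈ G.edgeFinset, w j τ)) * edist G (w j) e) :
    ∀ j : ℕ, ∀ e ∈ G.edgeFinset,
      0 < w j e ∧
      (1 - ((m : ℝ) + 1) * s) ^ j * w 0 e ≤ w j e ∧
      w j e ≤ (1 + (m : ℝ) * s) ^ j * ∑ τ ∈ G.edgeFinset, w 0 τ := by
  have hwe : ∀ e ∈ G.edgeFinset, e ∈ G.edgeSet := fun e he => SimpleGraph.mem_edgeFinset.1 he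
  have hms : 0 < 1 - ((m:ℝ)+1)*s := by
    have hm1 : (0:ℝ) < (m:ℝ)+1 := by positivity
    rw [lt_div_iff₀ hm1] at hs1
    nlinarith
  suffices H : ∀ j : ℕ, (∀ e ∈ G.edgeFinset, 0 < w j e ∧
      (1 - ((m:ℝ)+1)*s)^j * w 0 e ≤ w j e) ∧
      (∑ τ ∈ G.edgeFinset, w j τ) ≤ (1 + (m:ℝ)*s)^j * ∑ τ ∈ G.edgeFinset, w 0 τ by
    intro j e he
    obtain ⟨h1, h2⟩ := H j
    refine ⟨(h1 e he).1, (h1 e he).2, le_trans ?_ h2⟩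
    exact Finset.single_le_sum (fun τ hτ => ((h1 τ hτ).1).le) he
  intro j
  induction j with
  | zero => exact ⟨fun e he => ⟨hpos0 e he, by simp⟩, by simp⟩
  | succ j ih =>
    obtain ⟨ih1, ih2⟩ := ih
    by_cases hEne : G.edgeFinset.Nonempty
    · -- main case
      have hwpos : ∀ e ∈ G.edgeSet, 0 < w j e :=
        fun e he => (ih1 e (SimpleGraph.mem_edgeFinset.2 he)).1
      have hwnn : ∀ e ∈ G.edgeSet, 0 ≤ w j e := fun e he => (hwpos e he).le
      set S := ∑ τ ∈ G.edgeFinset, w j τ with hSdef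
      have hS : 0 < S := Finset.sum_pos (fun τ hτ => (ih1 τ hτ).1) hEne
      set P := ∑ τ ∈ G.edgeFinset, edist G (w j) τ with hPdef
      set Q := ∑ τ ∈ G.edgeFinset, wasserstein G (w j)
          (lazyWalk G (w j) α (endpoints τ).1) (lazyWalk G (w j) α (endpoints τ).2) with hQdef
      have hρpos : ∀ τ ∈ G.edgeFinset, 0 < edist G (w j) τ :=
        fun τ hτ => edistPos hwpos (hwe τ hτ)
      have hρle : ∀ τ ∈ G.edgeFinset, edist G (w j) τ ≤ w j τ :=
        fun τ hτ => edist_le_weight hwnn (hwe τ hτ)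
      have hWnn : ∀ τ ∈ G.edgeFinset, 0 ≤ wasserstein G (w j)
          (lazyWalk G (w j) α (endpoints τ).1) (lazyWalk G (w j) α (endpoints τ).2) :=
        fun τ _ => wasserstein_nonneg hwnn _ _
      have hWle : ∀ τ ∈ G.edgeFinset, wasserstein G (w j)
          (lazyWalk G (w j) α (endpoints τ).1) (lazyWalk G (w j) α (endpoints τ).2) ≤ S :=
        fun τ hτ => wasserstein_le_total hconn hwnn
          (edge_prob_fst hwpos hα (hwe τ hτ)) (edge_prob_snd hwpos hα (hwe τ hτ))
      have hP0 : 0 ≤ P := Finset.sum_nonneg (fun τ hτ => (hρpos τ hτ).le)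
      have hPS : P ≤ S := Finset.sum_le_sum hρle
      have hQ0 : 0 ≤ Q := Finset.sum_nonneg hWnn
      have hQm : Q ≤ (m:ℝ) * S := by
        calc Q ≤ ∑ _τ ∈ G.edgeFinset, S := Finset.sum_le_sum hWle
          _ = (m:ℝ) * S := by rw [Finset.sum_const, hm, nsmul_eq_mul]
      have hκsum : ∑ τ ∈ G.edgeFinset, ollivier G (w j) α τ * edist G (w j) τ = P - Q := by
        rw [hPdef, hQdef, ← Finset.sum_sub_distrib]
        exact Finset.sum_congr rfl (fun τ hτ => ollivier_mul_edist hwpos α (hwe τ hτ))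
      have hform : ∀ e ∈ G.edgeFinset, w (j+1) e = w j e
          + s * (wasserstein G (w j) (lazyWalk G (w j) α (endpoints e).1)
              (lazyWalk G (w j) α (endpoints e).2) - edist G (w j) e)
          + s * ((P - Q)/S) * edist G (w j) e := by
        intro e he
        rw [hflow j e he, hκsum, ← hSdef]
        have hid := ollivier_mul_edist (G := G) hwpos α (hwe e he)
        linear_combination (-s) * hid
      have hlow : ∀ e ∈ G.edgeFinset,
          (1 - ((m:ℝ)+1)*s) * w j e ≤ w (j+1) e := by
        intro e he
        set We := wasserstein G (w j) (lazyWalk G (w j) α (endpoints e).1)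
          (lazyWalk G (w j) α (endpoints e).2) with hWedef
        have h1 : 0 ≤ We := hWnn e he
        have h2 : 0 < edist G (w j) e := hρpos e he
        have h3 : edist G (w j) e ≤ w j e := hρle e he
        have hA : -(s * w j e) ≤ s * (We - edist G (w j) e) := by nlinarith
        have hB : -((m:ℝ) * s * w j e) ≤ s * ((P - Q)/S) * edist G (w j) e := by
          have heq : s * ((P - Q)/S) * edist G (w j) e
              = s * (P - Q) * edist G (w j) e / S := by ring
          rw [heq, le_div_iff₀ hS]
          have hQρ : Q * edist G (w j) e ≤ ((m:ℝ) * S) * w j e :=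
            mul_le_mul hQm h3 h2.le (by positivity)
          nlinarith [mul_nonneg (mul_nonneg hs0.le hP0) h2.le]
        rw [hform e he, ← hWedef]
        linarith
      constructor
      · intro e he
        have hw0 := (ih1 e he)
        constructor
        · calc (0:ℝ) < (1 - ((m:ℝ)+1)*s) * w j e := mul_pos hms hw0.1
            _ ≤ w (j+1) e := hlow e he
        · calc (1 - ((m:ℝ)+1)*s)^(j+1) * w 0 e
              = (1 - ((m:ℝ)+1)*s) * ((1 - ((m:ℝ)+1)*s)^j * w 0 e) := by ring
            _ ≤ (1 - ((m:ℝ)+1)*s) * w j e :=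
                mul_le_mul_of_nonneg_left hw0.2 hms.le
            _ ≤ w (j+1) e := hlow e he
      · -- sum bound
        have hsum' : ∑ τ ∈ G.edgeFinset, w (j+1) τ
            = S + s * (Q - P) + s * ((P - Q)/S) * P := by
          rw [Finset.sum_congr rfl hform]
          rw [Finset.sum_add_distrib, Finset.sum_add_distrib, ← hSdef]
          congr 1
          · congr 1
            rw [← Finset.mul_sum, Finset.sum_sub_distrib, ← hQdef, ← hPdef]
          · rw [← Finset.mul_sum, ← hPdef]
        have hstep : ∑ τ ∈ G.edgeFinset, w (j+1) τ ≤ (1 + (m:ℝ)*s) * S := by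
          rw [hsum']
          have key : (Q - P) * (S - P) ≤ (m:ℝ) * S * S := by
            nlinarith [mul_le_mul_of_nonneg_right hQm (by linarith : (0:ℝ) ≤ S - P),
              mul_nonneg hP0 (by linarith : (0:ℝ) ≤ S - P)]
          have heq : s * ((P - Q)/S) * P = s * (P - Q) * P / S := by ring
          have hdiv : s * (P - Q) * P / S ≤ (m:ℝ)*s*S - s*(Q - P) := by
            rw [div_le_iff₀ hS]
            nlinarith [mul_le_mul_of_nonneg_left key hs0.le]
          rw [heq]
          linarith
        calc ∑ τ ∈ G.edgeFinset, w (j+1) τ ≤ (1 + (m:ℝ)*s) * S := hstep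
          _ ≤ (1 + (m:ℝ)*s) * ((1 + (m:ℝ)*s)^j * ∑ τ ∈ G.edgeFinset, w 0 τ) := by
              apply mul_le_mul_of_nonneg_left ih2 (by positivity)
          _ = (1 + (m:ℝ)*s)^(j+1) * ∑ τ ∈ G.edgeFinset, w 0 τ := by ring
    · rw [Finset.not_nonempty_iff_eq_empty] at hEne
      constructor
      · intro e he; rw [hEne] at he; exact absurd he (Finset.notMem_empty e)
      · simp [hEne]
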